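/- arXiv:2002.02799 — 3 statements merged into one kernel-verified Lean document; each statement's English description precedes it below -/
import Mathlib

section
/- Fix λ > 0 and p ≥ 1. If g : ℝ → ℝ satisfies 0 ≤ g ≤ λ and ∫_ℝ g = 1, then ∫_ℝ |x|^p g(x) dx ≥ (2^{-(p+1)}/(p+1)) λ^{-p}. -/
/-!
Bathtub principle: with `a = 1/(2λ)`, the profile `λ · 1_{[-a,a]}` has the same mass as `g`
and puts it where `|x|^p` is smallest. Pointwise, `(|x|^p - a^p) (g x - λ 1_{[-a,a]} x) ≥ 0`;
integrating gives `∫ |x|^p g ≥ λ ∫_{-a}^{a} |x|^p ≥ λ a^{p+1} / (p+1)`, and the last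
quantity is the claimed constant.
-/

open MeasureTheory Set
open scoped ENNReal

theorem ENNReal.mul_add_mul_le_mul_add_mul {a b c d : ℝ≥0∞} (hab : a ≤ b) (hcd : c ≤ d) :
    a * d + b * c ≤ a * c + b * d := by
  obtain ⟨e, rfl⟩ := exists_add_of_le hcd
  obtain ⟨f, rfl⟩ := exists_add_of_le hab
  calc a * (c + e) + (a + f) * c ≤ a * (c + e) + (a + f) * c + f * e := le_self_add
    _ = a * c + (a + f) * (c + e) := by ring

theorem setLIntegral_const_mul_le_lintegral_mul_of_bathtub {α : Type*} [MeasurableSpace α]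
    {μ : Measure α} {s : Set α} (hs : MeasurableSet s) {φ g : α → ℝ≥0∞} (hφ : Measurable φ)
    {c L : ℝ≥0∞} (hc : c ≠ ∞) (hLs : L * μ s ≠ ∞) (hφs : ∀ x ∈ s, φ x ≤ c)
    (hφsc : ∀ x ∈ sᶜ, c ≤ φ x) (hgL : ∀ x ∈ s, g x ≤ L) (hmass : L * μ s ≤ ∫⁻ x, g x ∂μ) :
    ∫⁻ x in s, L * φ x ∂μ ≤ ∫⁻ x, φ x * g x ∂μ := by
  have h_in : ∫⁻ x in s, (L * φ x + c * g x) ∂μ ≤ ∫⁻ x in s, φ x * g x ∂μ + c * (L * μ s) := by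
    calc ∫⁻ x in s, (L * φ x + c * g x) ∂μ ≤ ∫⁻ x in s, (φ x * g x + c * L) ∂μ := by
          refine setLIntegral_mono' hs fun x hx => ?_
          calc L * φ x + c * g x = g x * c + L * φ x := by ring
            _ ≤ g x * φ x + L * c := ENNReal.mul_add_mul_le_mul_add_mul (hgL x hx) (hφs x hx)
            _ = φ x * g x + c * L := by ring
      _ = ∫⁻ x in s, φ x * g x ∂μ + c * (L * μ s) := by
          rw [lintegral_add_right _ measurable_const, setLIntegral_const, mul_assoc]
  have h_out : ∫⁻ x in sᶜ, c * g x ∂μ ≤ ∫⁻ x in sᶜ, φ x * g x ∂μ :=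
    setLIntegral_mono' hs.compl fun x hx => mul_le_mul_left (hφsc x hx) _
  refine (ENNReal.add_le_add_iff_right (ENNReal.mul_ne_top hc hLs)).1 ?_
  calc ∫⁻ x in s, L * φ x ∂μ + c * (L * μ s)
      ≤ ∫⁻ x in s, L * φ x ∂μ + (∫⁻ x in s, c * g x ∂μ + ∫⁻ x in sᶜ, c * g x ∂μ) := by
        rw [lintegral_add_compl _ hs, lintegral_const_mul' _ _ hc]
        gcongr
    _ = ∫⁻ x in s, (L * φ x + c * g x) ∂μ + ∫⁻ x in sᶜ, c * g x ∂μ := by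
        rw [lintegral_add_left (hφ.const_mul L), add_assoc]
    _ ≤ ∫⁻ x in s, φ x * g x ∂μ + c * (L * μ s) + ∫⁻ x in sᶜ, φ x * g x ∂μ :=
        add_le_add h_in h_out
    _ = ∫⁻ x, φ x * g x ∂μ + c * (L * μ s) := by
        conv_rhs => rw [← lintegral_add_compl _ hs]
        ring

theorem ofReal_rpow_div_le_setLIntegral_Icc_abs_rpow {a p : ℝ} (ha : 0 ≤ a) (hp : -1 < p) :
    ENNReal.ofReal (a ^ (p + 1) / (p + 1)) ≤ ∫⁻ x in Icc (-a) a, ENNReal.ofReal (|x| ^ p) := by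
  have h_int : ∫ x in Ioc 0 a, x ^ p = a ^ (p + 1) / (p + 1) := by
    rw [← intervalIntegral.integral_of_le ha, integral_rpow (Or.inl hp),
      Real.zero_rpow (by linarith), sub_zero]
  have h_integrable : IntegrableOn (fun x : ℝ => x ^ p) (Ioc 0 a) :=
    (intervalIntegrable_iff_integrableOn_Ioc_of_le ha).1
      (intervalIntegral.intervalIntegrable_rpow' hp)
  calc ENNReal.ofReal (a ^ (p + 1) / (p + 1)) = ∫⁻ x in Ioc 0 a, ENNReal.ofReal (x ^ p) := by
        rw [← h_int, ofReal_integral_eq_lintegral_ofReal h_integrable]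
        exact (ae_restrict_iff' measurableSet_Ioc).2
          (Filter.Eventually.of_forall fun x hx => Real.rpow_nonneg hx.1.le p)
    _ = ∫⁻ x in Ioc 0 a, ENNReal.ofReal (|x| ^ p) :=
        setLIntegral_congr_fun measurableSet_Ioc fun x hx => by rw [abs_of_pos hx.1]
    _ ≤ ∫⁻ x in Icc (-a) a, ENNReal.ofReal (|x| ^ p) :=
        lintegral_mono_set fun x hx => ⟨by linarith [hx.1], hx.2⟩

theorem setLIntegral_Icc_abs_rpow_le_lintegral_abs_rpow_mul {p a : ℝ} (hp : 0 ≤ p) (ha : 0 ≤ a)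
    {g : ℝ → ℝ≥0∞} {L : ℝ≥0∞} (hL : L ≠ ∞) (hgL : ∀ x, g x ≤ L)
    (hmass : L * ENNReal.ofReal (2 * a) ≤ ∫⁻ x, g x) :
    ∫⁻ x in Icc (-a) a, L * ENNReal.ofReal (|x| ^ p) ≤
      ∫⁻ x, ENNReal.ofReal (|x| ^ p) * g x := by
  have h_vol : volume (Icc (-a) a) = ENNReal.ofReal (2 * a) := by
    rw [Real.volume_Icc, sub_neg_eq_add, two_mul]
  refine setLIntegral_const_mul_le_lintegral_mul_of_bathtub measurableSet_Icc (by fun_prop)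
    (c := ENNReal.ofReal (a ^ p)) ENNReal.ofReal_ne_top
    (by rw [h_vol]; exact ENNReal.mul_ne_top hL ENNReal.ofReal_ne_top)
    (fun x hx => ?_) (fun x hx => ?_) (fun x _ => hgL x) (by rwa [h_vol])
  · exact ENNReal.ofReal_le_ofReal (Real.rpow_le_rpow (abs_nonneg x) (abs_le.2 hx) hp)
  · have hax : a ≤ |x| := not_lt.1 fun h => hx (abs_le.1 h.le)
    exact ENNReal.ofReal_le_ofReal (Real.rpow_le_rpow ha hax hp)

theorem stmt_2_general (lam p : ℝ) (hlam : 0 < lam) (hp : 1 ≤ p)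
    (g : ℝ → ℝ) (hnn : ∀ x, 0 ≤ g x)
    (hle : ∀ x, g x ≤ lam) (hmass : ∫ x, g x = 1) :
    ENNReal.ofReal (2 ^ (-(p + 1)) / (p + 1) * lam ^ (-p)) ≤
      ∫⁻ x, ENNReal.ofReal (|x| ^ p * g x) := by
  set a := (2 * lam)⁻¹ with ha_def
  have ha : 0 < a := by positivity
  have hp0 : 0 ≤ p := by linarith
  have h_const : 2 ^ (-(p + 1)) / (p + 1) * lam ^ (-p) = lam * (a ^ (p + 1) / (p + 1)) := by
    rw [ha_def, Real.inv_rpow (by positivity), Real.mul_rpow zero_le_two hlam.le,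
      Real.rpow_add hlam, Real.rpow_one, Real.rpow_neg zero_le_two, Real.rpow_neg hlam.le]
    field_simp
  have h_mass : ENNReal.ofReal lam * ENNReal.ofReal (2 * a) = ∫⁻ x, ENNReal.ofReal (g x) := by
    have hg : Integrable g := Integrable.of_integral_ne_zero (by simp [hmass])
    rw [← ofReal_integral_eq_lintegral_ofReal hg (.of_forall hnn), hmass,
      ← ENNReal.ofReal_mul hlam.le, ha_def]
    field_simp
  calc ENNReal.ofReal (2 ^ (-(p + 1)) / (p + 1) * lam ^ (-p))
      = ENNReal.ofReal lam * ENNReal.ofReal (a ^ (p + 1) / (p + 1)) := by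
        rw [h_const, ENNReal.ofReal_mul hlam.le]
    _ ≤ ENNReal.ofReal lam * ∫⁻ x in Icc (-a) a, ENNReal.ofReal (|x| ^ p) := by
        gcongr
        exact ofReal_rpow_div_le_setLIntegral_Icc_abs_rpow ha.le (by linarith)
    _ = ∫⁻ x in Icc (-a) a, ENNReal.ofReal lam * ENNReal.ofReal (|x| ^ p) :=
        (lintegral_const_mul' _ _ ENNReal.ofReal_ne_top).symm
    _ ≤ ∫⁻ x, ENNReal.ofReal (|x| ^ p) * ENNReal.ofReal (g x) :=
        setLIntegral_Icc_abs_rpow_le_lintegral_abs_rpow_mul hp0 ha.le ENNReal.ofReal_ne_top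
          (fun x => ENNReal.ofReal_le_ofReal (hle x)) h_mass.le
    _ = ∫⁻ x, ENNReal.ofReal (|x| ^ p * g x) :=
        lintegral_congr fun x => (ENNReal.ofReal_mul (by positivity)).symm

theorem stmt_2 (lam p : ℝ) (hlam : 0 < lam) (hp : 1 ≤ p)
    (g : ℝ → ℝ) (hmeas : Measurable g) (hnn : ∀ x, 0 ≤ g x)
    (hle : ∀ x, g x ≤ lam) (hmass : ∫ x, g x = 1) :
    ENNReal.ofReal (2 ^ (-(p + 1)) / (p + 1) * lam ^ (-p)) ≤
      ∫⁻ x, ENNReal.ofReal (|x| ^ p * g x) :=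
  stmt_2_general lam p hlam hp g hnn hle hmass
end

section
/- Let g : ℝ → ℝ be a C¹, nonnegative, integrable function with ∫ g = 1, attaining its maximum M > 0 at some point, and with g(x) → 0 as x → -∞. Let E = ∫ g² and D = ∫ (g')². Then M - E ≥ M⁴/(81 D) (in particular D > 0 when M > 0). -/
/-!
Between the point `a` far to the left, where `g a < M / 3`, and the maximum point, `g` must climb
from `M / 3` to `2 M / 3`; take the innermost such climb `[x₁, x₂]`, on which `M / 3 ≤ g ≤ 2 M / 3`.
By the fundamental theorem of calculus and Cauchy–Schwarz, `(M / 3)² ≤ (x₂ - x₁) D`, so the climb is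
long. On it `g (M - g) ≥ (M / 3)²`, and since `M - E = ∫ g (M - g)` with a nonnegative integrand,
`M - E ≥ (M / 3)² (x₂ - x₁) ≥ M⁴ / (81 D)`.
-/

open MeasureTheory Filter Set OrderDual

section Crossing

variable {α δ : Type*} [ConditionallyCompleteLinearOrder α] [TopologicalSpace α] [OrderTopology α]
  [DenselyOrdered α] [LinearOrder δ] [TopologicalSpace δ] [OrderClosedTopology δ]
  {f : α → δ} {a b : α}

theorem exists_first_hit {t : δ} (hab : a ≤ b) (hf : ContinuousOn f (Icc a b))
    (ha : f a ≤ t) (hb : t ≤ f b) :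
    ∃ c ∈ Icc a b, f c = t ∧ ∀ y ∈ Ico a c, f y < t := by
  set S := Icc a b ∩ f ⁻¹' {t}
  have hS : IsClosed S := hf.preimage_isClosed_of_isClosed isClosed_Icc isClosed_singleton
  have hne : S.Nonempty := intermediate_value_Icc hab hf ⟨ha, hb⟩
  have hbdd : BddBelow S := ⟨a, fun x hx => hx.1.1⟩
  obtain ⟨⟨hac, hcb⟩, hfc⟩ := hS.csInf_mem hne hbdd
  refine ⟨sInf S, ⟨hac, hcb⟩, hfc, fun y ⟨hay, hyc⟩ => lt_of_not_ge fun hty => ?_⟩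
  have hyb : y ≤ b := hyc.le.trans hcb
  obtain ⟨z, ⟨haz, hzy⟩, hfz⟩ :=
    intermediate_value_Icc hay (hf.mono (Icc_subset_Icc_right hyb)) ⟨ha, hty⟩
  exact ((csInf_le hbdd ⟨⟨haz, hzy.trans hyb⟩, hfz⟩).trans hzy).not_gt hyc

theorem exists_last_hit {t : δ} (hab : a ≤ b) (hf : ContinuousOn f (Icc a b))
    (ha : f a ≤ t) (hb : t ≤ f b) :
    ∃ c ∈ Icc a b, f c = t ∧ ∀ y ∈ Ioc c b, t < f y := by
  have hf' : ContinuousOn (toDual ∘ f ∘ ofDual) (Icc (toDual b) (toDual a)) := by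
    rw [Icc_toDual]
    exact continuous_toDual.comp_continuousOn
      (hf.comp continuous_ofDual.continuousOn (mapsTo_preimage _ _))
  obtain ⟨c, ⟨hbc, hca⟩, hfc, hlt⟩ :=
    exists_first_hit (f := toDual ∘ f ∘ ofDual) (a := toDual b) (b := toDual a) (t := toDual t)
      hab hf' hb ha
  exact ⟨ofDual c, ⟨hca, hbc⟩, hfc, fun y ⟨hcy, hyb⟩ => hlt (toDual y) ⟨hyb, hcy⟩⟩

theorem exists_Icc_mapsTo_Icc {s t : δ} (hab : a ≤ b) (hf : ContinuousOn f (Icc a b))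
    (ha : f a ≤ s) (hst : s ≤ t) (hb : t ≤ f b) :
    ∃ x₁ x₂, x₁ ≤ x₂ ∧ f x₁ = s ∧ f x₂ = t ∧ MapsTo f (Icc x₁ x₂) (Icc s t) := by
  obtain ⟨x₂, ⟨hax₂, hx₂b⟩, hfx₂, hbelow⟩ := exists_first_hit hab hf (ha.trans hst) hb
  obtain ⟨x₁, ⟨hax₁, hx₁₂⟩, hfx₁, habove⟩ :=
    exists_last_hit hax₂ (hf.mono (Icc_subset_Icc_right hx₂b)) ha (hst.trans hfx₂.ge)
  refine ⟨x₁, x₂, hx₁₂, hfx₁, hfx₂, fun y ⟨h₁, h₂⟩ => ⟨?_, ?_⟩⟩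
  · rcases h₁.eq_or_lt with rfl | h₁
    exacts [hfx₁.ge, (habove y ⟨h₁, h₂⟩).le]
  · rcases h₂.lt_or_eq with h₂ | rfl
    exacts [(hbelow y ⟨hax₁.trans h₁, h₂⟩).le, hfx₂.le]

end Crossing

theorem sq_intervalIntegral_le_mul_intervalIntegral_sq {f : ℝ → ℝ} {a b : ℝ} (hab : a ≤ b)
    (hf : IntervalIntegrable f volume a b)
    (hf2 : IntervalIntegrable (fun x => f x ^ 2) volume a b) :
    (∫ x in a..b, f x) ^ 2 ≤ (b - a) * ∫ x in a..b, f x ^ 2 := by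
  have hquad : ∀ s : ℝ,
      0 ≤ (b - a) * (s * s) + (-2 * ∫ x in a..b, f x) * s + ∫ x in a..b, f x ^ 2 := fun s => by
    have hexp : ∫ x in a..b, (f x - s) ^ 2 =
        (b - a) * (s * s) + (-2 * ∫ x in a..b, f x) * s + ∫ x in a..b, f x ^ 2 := by
      have hlin : IntervalIntegrable (fun x => 2 * f x * s) volume a b :=
        (hf.const_mul 2).mul_const s
      simp_rw [sub_sq]
      rw [intervalIntegral.integral_add (hf2.sub hlin) intervalIntegrable_const,
        intervalIntegral.integral_sub hf2 hlin, intervalIntegral.integral_mul_const,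
        intervalIntegral.integral_const_mul, intervalIntegral.integral_const, smul_eq_mul]
      ring
    exact hexp ▸ intervalIntegral.integral_nonneg hab fun _ _ => sq_nonneg _
  have := discrim_le_zero hquad
  rw [discrim] at this
  linarith

theorem sq_sub_le_mul_intervalIntegral_deriv_sq {g : ℝ → ℝ} (hg : ContDiff ℝ 1 g) {a b : ℝ}
    (hab : a ≤ b) : (g b - g a) ^ 2 ≤ (b - a) * ∫ x in a..b, deriv g x ^ 2 := by
  have hg' := hg.continuous_deriv le_rfl
  rw [← intervalIntegral.integral_deriv_eq_sub
    (fun x _ => (hg.differentiable one_ne_zero).differentiableAt) (hg'.intervalIntegrable _ _)]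
  exact sq_intervalIntegral_le_mul_intervalIntegral_sq hab (hg'.intervalIntegrable _ _)
    ((hg'.pow 2).intervalIntegrable _ _)

theorem mul_sub_le_integral_of_forall_mem_Icc_le {f : ℝ → ℝ} {a b c : ℝ} (hab : a ≤ b)
    (hf : Integrable f) (hnn : ∀ x, 0 ≤ f x) (hc : ∀ x ∈ Icc a b, c ≤ f x) :
    c * (b - a) ≤ ∫ x, f x :=
  calc c * (b - a) = c * volume.real (Icc a b) := by rw [Real.volume_real_Icc_of_le hab]
    _ ≤ ∫ x in Icc a b, f x :=
      setIntegral_ge_of_const_le_real measurableSet_Icc measure_Icc_lt_top.ne hc hf.integrableOn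
    _ ≤ ∫ x, f x := setIntegral_le_integral hf (Eventually.of_forall hnn)

theorem stmt_4 (g : ℝ → ℝ) (hg : ContDiff ℝ 1 g) (hnn : ∀ x, 0 ≤ g x)
    (hint : Integrable g) (hmass : ∫ x, g x = 1)
    (hsq : Integrable (fun x => (g x) ^ 2))
    (hD : Integrable (fun x => (deriv g x) ^ 2))
    (x₀ : ℝ) (hmax : ∀ x, g x ≤ g x₀) (hM : 0 < g x₀)
    (hlim : Tendsto g atBot (nhds 0)) :
    g x₀ - ∫ x, (g x) ^ 2 ≥ (g x₀) ^ 4 / (81 * ∫ x, (deriv g x) ^ 2) := by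
  set M := g x₀
  obtain ⟨a, hga, hax₀⟩ :=
    ((hlim.eventually_lt_const (by positivity : 0 < M / 3)).and (eventually_lt_atBot x₀)).exists
  obtain ⟨x₁, x₂, hx₁₂, hgx₁, hgx₂, hmid⟩ := exists_Icc_mapsTo_Icc hax₀.le
    hg.continuous.continuousOn hga.le (by linarith : M / 3 ≤ 2 * M / 3) (by linarith)
  have hDnn : 0 ≤ ∫ x, deriv g x ^ 2 := integral_nonneg fun _ => sq_nonneg _
  have hclimb : (M / 3) ^ 2 ≤ (x₂ - x₁) * ∫ x, deriv g x ^ 2 :=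
    calc (M / 3) ^ 2 = (g x₂ - g x₁) ^ 2 := by rw [hgx₁, hgx₂]; ring
      _ ≤ (x₂ - x₁) * ∫ x in x₁..x₂, deriv g x ^ 2 :=
        sq_sub_le_mul_intervalIntegral_deriv_sq hg hx₁₂
      _ ≤ (x₂ - x₁) * ∫ x, deriv g x ^ 2 := by
        rw [intervalIntegral.integral_of_le hx₁₂]
        exact mul_le_mul_of_nonneg_left
          (setIntegral_le_integral hD (Eventually.of_forall fun _ => sq_nonneg _))
          (sub_nonneg.2 hx₁₂)
  have hgap : (M / 3) ^ 2 * (x₂ - x₁) ≤ M - ∫ x, g x ^ 2 :=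
    calc (M / 3) ^ 2 * (x₂ - x₁) ≤ ∫ x, (M * g x - g x ^ 2) :=
          mul_sub_le_integral_of_forall_mem_Icc_le hx₁₂ ((hint.const_mul M).sub hsq)
            (fun x => by nlinarith [hnn x, hmax x])
            (fun x hx => by nlinarith [(hmid hx).1, (hmid hx).2])
      _ = M - ∫ x, g x ^ 2 := by
        rw [integral_sub (hint.const_mul M) hsq, integral_const_mul, hmass, mul_one]
  have hgap_nonneg : 0 ≤ M - ∫ x, g x ^ 2 :=
    (mul_nonneg (sq_nonneg _) (sub_nonneg.2 hx₁₂)).trans hgap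
  refine div_le_of_le_mul₀ (by positivity) hgap_nonneg ?_
  nlinarith [mul_le_mul_of_nonneg_left hclimb (sq_nonneg (M / 3)),
    mul_le_mul_of_nonneg_right hgap hDnn]
end

section
/- Let M, E, D : (0,∞) → [0,∞) satisfy: (i) M(t₂) ≤ M(t₁) + ∫_{t₁}^{t₂}(E(s)M(s) - M(s)²) ds for all 0 < t₁ < t₂; (ii) E(t₂) ≤ E(t₁) - ∫_{t₁}^{t₂} D(s) ds for all 0 < t₁ < t₂; (iii) E(t) ≤ M(t) for all t; (iv) M(t) - E(t) ≥ M(t)⁴/(C₁ D(t)) for all t with D(t) > 0, where C₁ > 0 is a constant. Assume M, E, D are continuous, D > 0, and t^{2/3} M(t) → 0 as t → 0⁺. Then M(t) ≤ 2C₁^{1/3} t^{-2/3} for all t > 0. -/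
/-!
By (i) and (iii) `M` is nonincreasing, and by (iv) the dissipation `∫ M (M - E)` in (i)
dominates `∫ M⁵ / (C₁ D)`. If `f t = t ^ (2/3) * M t` exceeded `A = 2 C₁^(1/3)` somewhere,
take the first time `t₀` at which `f` reaches that value `B > A`, and put `m = M t₀`.
If `M (t₀/2) ≥ 2m`, then `f (t₀/2) ≥ f t₀ ≥ B`, contradicting minimality. Otherwise
Cauchy–Schwarz gives `(t₀/2)² ≤ (∫ D) (∫ D⁻¹)` over `[t₀/2, t₀]`, where
`∫ D ≤ E (t₀/2) ≤ 2m` by (ii), (iii) and `m⁵ ∫ D⁻¹ ≤ C₁ (M (t₀/2) - m) ≤ C₁ m`;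
hence `m³ t₀² ≤ 8 C₁`, i.e. `f t₀ ≤ A < B`.
-/

open MeasureTheory Filter intervalIntegral Set Topology

theorem sq_sub_le_integral_mul_integral_inv {D : ℝ → ℝ} {a b : ℝ} (hab : a ≤ b)
    (hD : ContinuousOn D (Icc a b)) (hpos : ∀ s ∈ Icc a b, 0 < D s) :
    (b - a) ^ 2 ≤ (∫ s in a..b, D s) * ∫ s in a..b, (D s)⁻¹ := by
  have hDi : IntervalIntegrable D volume a b := hD.intervalIntegrable_of_Icc hab
  have hDinv : IntervalIntegrable (fun s => (D s)⁻¹) volume a b :=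
    (hD.inv₀ fun s hs => (hpos s hs).ne').intervalIntegrable_of_Icc hab
  -- Cauchy–Schwarz via the discriminant of `x ↦ ∫ (x D - 1)² / D ≥ 0`.
  have hquad : ∀ x : ℝ, 0 ≤ (∫ s in a..b, D s) * (x * x) + (-2 * (b - a)) * x
      + ∫ s in a..b, (D s)⁻¹ := by
    intro x
    have hint : ∫ s in a..b, (x * x * D s + -2 * x + (D s)⁻¹) =
        (∫ s in a..b, D s) * (x * x) + (-2 * (b - a)) * x + ∫ s in a..b, (D s)⁻¹ := by
      rw [integral_add ((hDi.const_mul _).add intervalIntegrable_const) hDinv,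
        integral_add (hDi.const_mul _) intervalIntegrable_const,
        intervalIntegral.integral_const_mul, intervalIntegral.integral_const, smul_eq_mul]
      ring
    rw [← hint]
    refine integral_nonneg hab fun s hs => ?_
    have hDs := hpos s hs
    have : x * x * D s + -2 * x + (D s)⁻¹ = (x * D s - 1) ^ 2 / D s := by
      field_simp
      ring
    rw [this]
    positivity
  have := discrim_le_zero hquad
  rw [discrim] at this
  nlinarith

theorem antitoneOn_of_le_add_integral {M E : ℝ → ℝ}
    (hi : ∀ t₁ t₂, 0 < t₁ → t₁ < t₂ → M t₂ ≤ M t₁ + ∫ s in t₁..t₂, (E s * M s - M s ^ 2))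
    (hEM : ∀ t, 0 < t → E t ≤ M t) (hM : ∀ t, 0 < t → 0 ≤ M t) :
    AntitoneOn M (Ioi 0) := by
  intro t₁ ht₁ t₂ _ h12
  rcases h12.eq_or_lt with rfl | h12
  · rfl
  have hdiss : 0 ≤ ∫ s in t₁..t₂, M s * (M s - E s) := by
    refine integral_nonneg h12.le fun s hs => ?_
    have hs₀ : 0 < s := lt_of_lt_of_le ht₁ hs.1
    exact mul_nonneg (hM s hs₀) (sub_nonneg.2 (hEM s hs₀))
  have hneg : ∫ s in t₁..t₂, (E s * M s - M s ^ 2) = -∫ s in t₁..t₂, M s * (M s - E s) := by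
    rw [← intervalIntegral.integral_neg]
    congr 1 with s
    ring
  linarith [hi t₁ t₂ ht₁ h12]

theorem pow_five_mul_integral_inv_le {C₁ : ℝ} {M E D : ℝ → ℝ} {t₁ t₂ : ℝ} (hC₁ : 0 < C₁)
    (h12 : t₁ ≤ t₂) (hM : ContinuousOn M (Icc t₁ t₂)) (hE : ContinuousOn E (Icc t₁ t₂))
    (hD : ContinuousOn D (Icc t₁ t₂)) (hDpos : ∀ s ∈ Icc t₁ t₂, 0 < D s)
    (hM₂ : 0 ≤ M t₂) (hmin : ∀ s ∈ Icc t₁ t₂, M t₂ ≤ M s)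
    (hi : M t₂ ≤ M t₁ + ∫ s in t₁..t₂, (E s * M s - M s ^ 2))
    (hiv : ∀ s ∈ Icc t₁ t₂, M s - E s ≥ M s ^ 4 / (C₁ * D s)) :
    M t₂ ^ 5 * ∫ s in t₁..t₂, (D s)⁻¹ ≤ C₁ * (M t₁ - M t₂) := by
  have hneg : ∫ s in t₁..t₂, (E s * M s - M s ^ 2) = -∫ s in t₁..t₂, M s * (M s - E s) := by
    rw [← intervalIntegral.integral_neg]
    congr 1 with s
    ring
  have hmono :
      ∫ s in t₁..t₂, M t₂ ^ 5 / C₁ * (D s)⁻¹ ≤ ∫ s in t₁..t₂, M s * (M s - E s) := by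
    refine integral_mono_on h12
      (((hD.inv₀ fun s hs => (hDpos s hs).ne').intervalIntegrable_of_Icc h12).const_mul _)
      ((hM.mul (hM.sub hE)).intervalIntegrable_of_Icc h12) fun s hs => ?_
    have hDs := hDpos s hs
    calc M t₂ ^ 5 / C₁ * (D s)⁻¹ = M t₂ ^ 5 / (C₁ * D s) := by field_simp
      _ ≤ M s ^ 5 / (C₁ * D s) := by gcongr; exact hmin s hs
      _ = M s * (M s ^ 4 / (C₁ * D s)) := by ring
      _ ≤ M s * (M s - E s) := by gcongr; exacts [hM₂.trans (hmin s hs), hiv s hs]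
  rw [intervalIntegral.integral_const_mul] at hmono
  calc M t₂ ^ 5 * ∫ s in t₁..t₂, (D s)⁻¹
        = C₁ * (M t₂ ^ 5 / C₁ * ∫ s in t₁..t₂, (D s)⁻¹) := by field_simp
    _ ≤ C₁ * (M t₁ - M t₂) := by gcongr; linarith

theorem sq_sub_mul_pow_five_le {C₁ : ℝ} {M E D : ℝ → ℝ} (hC₁ : 0 < C₁)
    (hMnn : ∀ t, 0 < t → 0 ≤ M t) (hDpos : ∀ t, 0 < t → 0 < D t)
    (hMcont : ContinuousOn M (Ioi 0)) (hEcont : ContinuousOn E (Ioi 0))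
    (hDcont : ContinuousOn D (Ioi 0)) (hanti : AntitoneOn M (Ioi 0))
    (hi : ∀ t₁ t₂, 0 < t₁ → t₁ < t₂ → M t₂ ≤ M t₁ + ∫ s in t₁..t₂, (E s * M s - M s ^ 2))
    (hii : ∀ t₁ t₂, 0 < t₁ → t₁ < t₂ → E t₂ ≤ E t₁ - ∫ s in t₁..t₂, D s)
    (hiv : ∀ t, 0 < t → M t - E t ≥ M t ^ 4 / (C₁ * D t)) {t₁ t₂ : ℝ} (h₁ : 0 < t₁)
    (h12 : t₁ < t₂) :
    (t₂ - t₁) ^ 2 * M t₂ ^ 5 ≤ C₁ * (E t₁ - E t₂) * (M t₁ - M t₂) := by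
  have hsub : Icc t₁ t₂ ⊆ Ioi 0 := fun s hs => h₁.trans_le hs.1
  have hM₂ : 0 ≤ M t₂ := hMnn t₂ (h₁.trans h12)
  have hmin : ∀ s ∈ Icc t₁ t₂, M t₂ ≤ M s := fun s hs =>
    hanti (hsub hs) (h₁.trans h12) hs.2
  have hCS := sq_sub_le_integral_mul_integral_inv h12.le (hDcont.mono hsub)
    fun s hs => hDpos s (hsub hs)
  have hJ := pow_five_mul_integral_inv_le hC₁ h12.le (hMcont.mono hsub) (hEcont.mono hsub)
    (hDcont.mono hsub) (fun s hs => hDpos s (hsub hs)) hM₂ hmin (hi t₁ t₂ h₁ h12)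
    fun s hs => hiv s (hsub hs)
  have hI₀ : 0 ≤ ∫ s in t₁..t₂, D s :=
    integral_nonneg h12.le fun s hs => (hDpos s (hsub hs)).le
  have hI : ∫ s in t₁..t₂, D s ≤ E t₁ - E t₂ := by linarith [hii t₁ t₂ h₁ h12]
  have hM₁₂ : 0 ≤ M t₁ - M t₂ := sub_nonneg.2 (hmin t₁ ⟨le_rfl, h12.le⟩)
  calc (t₂ - t₁) ^ 2 * M t₂ ^ 5
      ≤ (∫ s in t₁..t₂, D s) * (∫ s in t₁..t₂, (D s)⁻¹) * M t₂ ^ 5 := by gcongr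
    _ = (∫ s in t₁..t₂, D s) * (M t₂ ^ 5 * ∫ s in t₁..t₂, (D s)⁻¹) := by ring
    _ ≤ (∫ s in t₁..t₂, D s) * (C₁ * (M t₁ - M t₂)) := by gcongr
    _ ≤ (E t₁ - E t₂) * (C₁ * (M t₁ - M t₂)) := by gcongr
    _ = C₁ * (E t₁ - E t₂) * (M t₁ - M t₂) := by ring

theorem rpow_two_div_three_mul_le_half_rpow_mul {t m a : ℝ} (ht : 0 ≤ t) (hm : 0 ≤ m)
    (h : 2 * m ≤ a) : t ^ ((2 : ℝ) / 3) * m ≤ (t / 2) ^ ((2 : ℝ) / 3) * a := by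
  have h2 : (2 : ℝ) ^ ((2 : ℝ) / 3) ≤ 2 := by
    simpa using Real.rpow_le_rpow_of_exponent_le (x := 2) one_le_two
      (by norm_num : (2 : ℝ) / 3 ≤ 1)
  have h2pos : (0 : ℝ) < 2 ^ ((2 : ℝ) / 3) := by positivity
  calc t ^ ((2 : ℝ) / 3) * m
        = t ^ ((2 : ℝ) / 3) / 2 ^ ((2 : ℝ) / 3) * (2 ^ ((2 : ℝ) / 3) * m) := by field_simp
    _ ≤ t ^ ((2 : ℝ) / 3) / 2 ^ ((2 : ℝ) / 3) * a := by
        gcongr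
        nlinarith
    _ = (t / 2) ^ ((2 : ℝ) / 3) * a := by rw [Real.div_rpow ht zero_le_two]

theorem rpow_two_div_three_mul_le_of_sq_mul_pow_five_le {C m t : ℝ} (hC : 0 ≤ C) (hm : 0 ≤ m)
    (ht : 0 ≤ t) (h : (t / 2) ^ 2 * m ^ 5 ≤ 2 * C * m ^ 2) :
    t ^ ((2 : ℝ) / 3) * m ≤ 2 * C ^ ((1 : ℝ) / 3) := by
  have hcube : m ^ 3 * t ^ 2 ≤ 8 * C := by
    rcases hm.eq_or_lt with rfl | hm
    · rw [zero_pow three_ne_zero, zero_mul]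
      positivity
    · nlinarith [pow_pos hm 2]
  have ht3 : (t ^ ((2 : ℝ) / 3)) ^ 3 = t ^ 2 := by
    rw [← Real.rpow_natCast, ← Real.rpow_mul ht]
    norm_num
  have hC3 : (C ^ ((1 : ℝ) / 3)) ^ 3 = C := by
    rw [← Real.rpow_natCast, ← Real.rpow_mul hC]
    norm_num
  refine le_of_pow_le_pow_left₀ three_ne_zero (by positivity) ?_
  rw [mul_pow, mul_pow, ht3, hC3]
  linarith

theorem exists_first_ge_of_eventually_lt {f : ℝ → ℝ} {B t : ℝ} (hf : ContinuousOn f (Ioi 0))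
    (hlt : ∀ᶠ s in 𝓝[>] 0, f s < B) (ht : 0 < t) (hB : B ≤ f t) :
    ∃ t₀, 0 < t₀ ∧ B ≤ f t₀ ∧ ∀ s ∈ Ioo 0 t₀, f s < B := by
  obtain ⟨δ, hδ, hδlt⟩ := (nhdsGT_basis (0 : ℝ)).eventually_iff.1 hlt
  have hδt : δ ≤ t := not_lt.1 fun h => (hδlt ⟨ht, h⟩).not_ge hB
  have hS : IsCompact (Icc δ t ∩ f ⁻¹' Ici B) :=
    isCompact_Icc.of_isClosed_subset
      ((hf.mono fun s hs => hδ.trans_le hs.1).preimage_isClosed_of_isClosed isClosed_Icc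
        isClosed_Ici) inter_subset_left
  obtain ⟨t₀, ⟨⟨hδt₀, ht₀t⟩, hBt₀⟩, hleast⟩ := hS.exists_isLeast ⟨t, ⟨hδt, le_rfl⟩, hB⟩
  refine ⟨t₀, hδ.trans_le hδt₀, hBt₀, fun s hs => ?_⟩
  by_contra! hBs
  rcases lt_or_ge s δ with hsδ | hδs
  · exact (hδlt ⟨hs.1, hsδ⟩).not_ge hBs
  · exact (hleast ⟨⟨hδs, hs.2.le.trans ht₀t⟩, hBs⟩).not_gt hs.2

theorem stmt_19 (C₁ : ℝ) (hC₁ : 0 < C₁) (M E D : ℝ → ℝ)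
    (hMnn : ∀ t, 0 < t → 0 ≤ M t) (hEnn : ∀ t, 0 < t → 0 ≤ E t)
    (hDpos : ∀ t, 0 < t → 0 < D t)
    (hMcont : ContinuousOn M (Set.Ioi (0 : ℝ)))
    (hEcont : ContinuousOn E (Set.Ioi (0 : ℝ)))
    (hDcont : ContinuousOn D (Set.Ioi (0 : ℝ)))
    (hi : ∀ t₁ t₂, 0 < t₁ → t₁ < t₂ →
      M t₂ ≤ M t₁ + ∫ s in t₁..t₂, (E s * M s - (M s) ^ 2))
    (hii : ∀ t₁ t₂, 0 < t₁ → t₁ < t₂ →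
      E t₂ ≤ E t₁ - ∫ s in t₁..t₂, D s)
    (hiii : ∀ t, 0 < t → E t ≤ M t)
    (hiv : ∀ t, 0 < t → M t - E t ≥ (M t) ^ 4 / (C₁ * D t))
    (hlim : Tendsto (fun t => t ^ ((2 : ℝ) / 3) * M t)
      (nhdsWithin 0 (Set.Ioi 0)) (nhds 0)) :
    ∀ t : ℝ, 0 < t → M t ≤ 2 * C₁ ^ ((1 : ℝ) / 3) * t ^ (-(2 : ℝ) / 3) := by
  have hanti := antitoneOn_of_le_add_integral hi hiii hMnn
  have hbound : ∀ t, 0 < t → t ^ ((2 : ℝ) / 3) * M t ≤ 2 * C₁ ^ ((1 : ℝ) / 3) := by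
    intro t ht
    by_contra! hA
    have hf : ContinuousOn (fun t => t ^ ((2 : ℝ) / 3) * M t) (Ioi 0) :=
      (continuousOn_id.rpow_const fun _ _ => Or.inr (by norm_num)).mul hMcont
    obtain ⟨t₀, ht₀, hreach, hbefore⟩ := exists_first_ge_of_eventually_lt hf
      (hlim.eventually_lt_const (lt_of_le_of_lt (by positivity) hA)) ht le_rfl
    have hhalf := hbefore (t₀ / 2) ⟨by positivity, by linarith⟩
    rcases le_total (M (t₀ / 2)) (2 * M t₀) with hle | hge
    · have hM₀ := hMnn t₀ ht₀
      have hdecay := sq_sub_mul_pow_five_le hC₁ hMnn hDpos hMcont hEcont hDcont hanti hi hii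
        hiv (half_pos ht₀) (half_lt_self ht₀)
      have hdrop : 0 ≤ M (t₀ / 2) - M t₀ :=
        sub_nonneg.2 (hanti (half_pos ht₀) ht₀ (by linarith))
      have hE : E (t₀ / 2) - E t₀ ≤ 2 * M t₀ := by
        linarith [hEnn t₀ ht₀, hiii (t₀ / 2) (half_pos ht₀)]
      have : (t₀ / 2) ^ 2 * M t₀ ^ 5 ≤ 2 * C₁ * M t₀ ^ 2 := by
        calc (t₀ / 2) ^ 2 * M t₀ ^ 5 ≤ C₁ * (E (t₀ / 2) - E t₀) * (M (t₀ / 2) - M t₀) := by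
              rwa [sub_half] at hdecay
          _ ≤ C₁ * (2 * M t₀) * M t₀ := by gcongr; linarith
          _ = 2 * C₁ * M t₀ ^ 2 := by ring
      linarith [rpow_two_div_three_mul_le_of_sq_mul_pow_five_le hC₁.le hM₀ ht₀.le this]
    · linarith [rpow_two_div_three_mul_le_half_rpow_mul ht₀.le (hMnn t₀ ht₀) hge]
  intro t ht
  rw [neg_div, Real.rpow_neg ht.le, ← div_eq_mul_inv, le_div_iff₀ (by positivity), mul_comm]
  exact hbound t ht
end
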